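/- Let E be a real Banach space, V : E → ℝ a lower semicontinuous convex function, and K ⊆ E a compact set such that V is bounded above on K. Then the restriction of V to K is Lipschitz (with respect to the metric induced by the norm). -/

import Mathlib

/-!
By the Baire category theorem, some sublevel set `{V ≤ n}` of the lower semicontinuous function
`V` (closed sets covering `E`) has nonempty interior, so `V` is bounded above near some point.
A convex function bounded above near one point of an open convex set is locally Lipschitz on it,
and a locally Lipschitz function is Lipschitz on every compact set.
-/

open Filter Set Topology

theorem LowerSemicontinuous.exists_isBoundedUnder_le_nhds {X : Type*} [TopologicalSpace X]
    [BaireSpace X] [Nonempty X] {f : X → ℝ} (hf : LowerSemicontinuous f) :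
    ∃ x, (𝓝 x).IsBoundedUnder (· ≤ ·) f := by
  have hcover : ⋃ n : ℕ, {x | f x ≤ n} = univ :=
    eq_univ_of_forall fun x => mem_iUnion.2 ⟨⌈f x⌉₊, mem_ofPred.2 (Nat.le_ceil _)⟩
  obtain ⟨n, x, hx⟩ :=
    nonempty_interior_of_iUnion_of_closed (fun n : ℕ => hf.isClosed_preimage n) hcover
  exact ⟨x, n, eventually_map.2 (mem_of_superset (isOpen_interior.mem_nhds hx) interior_subset)⟩

theorem ConvexOn.locallyLipschitzOn_univ_of_lowerSemicontinuous {E : Type*}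
    [NormedAddCommGroup E] [NormedSpace ℝ E] [CompleteSpace E] {f : E → ℝ}
    (hconv : ConvexOn ℝ univ f) (hlsc : LowerSemicontinuous f) :
    LocallyLipschitzOn univ f := by
  obtain ⟨x, hx⟩ := hlsc.exists_isBoundedUnder_le_nhds
  exact ((hconv.continuousOn_tfae isOpen_univ univ_nonempty).out 3 0).mp
    (show ∃ x₀ ∈ univ, (𝓝 x₀).IsBoundedUnder (· ≤ ·) f from ⟨x, mem_univ x, hx⟩)

theorem lsc_convex_lipschitzOn_of_compact_general
    {E : Type*} [NormedAddCommGroup E] [NormedSpace ℝ E] [CompleteSpace E]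
    {V : E → ℝ} (hconv : ConvexOn ℝ Set.univ V) (hlsc : LowerSemicontinuous V)
    {K : Set E} (hK : IsCompact K) :
    ∃ L : NNReal, LipschitzOnWith L V K :=
  ((hconv.locallyLipschitzOn_univ_of_lowerSemicontinuous hlsc).mono
    (subset_univ K)).exists_lipschitzOnWith_of_compact hK

/-- A lower semicontinuous convex function on a real Banach space which is
bounded above on a compact set `K` is Lipschitz on `K`. -/
theorem lsc_convex_lipschitzOn_of_compact
    {E : Type*} [NormedAddCommGroup E] [NormedSpace ℝ E] [CompleteSpace E]
    {V : E → ℝ} (hconv : ConvexOn ℝ Set.univ V) (hlsc : LowerSemicontinuous V)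
    {K : Set E} (hK : IsCompact K)
    {C : ℝ} (hC : ∀ x ∈ K, V x ≤ C) :
    ∃ L : NNReal, LipschitzOnWith L V K :=
  lsc_convex_lipschitzOn_of_compact_general hconv hlsc hK
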